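/- arXiv:1910.08281 — 3 statements merged into one kernel-verified Lean document; each statement's English description precedes it below -/
import Mathlib

section
/- Let a ∈ (0,1), let μ₀, μ₁, μ₂ ∈ ℝ and σ₀, σ₁, σ₂ > 0 with (μ₁, σ₁) ≠ (μ₂, σ₂), and let f : ℝ → ℝ be an admissible flow such that the pushforward of N(μ₀, σ₀²) under f equals the mixture a·N(μ₁, σ₁²) + (1−a)·N(μ₂, σ₂²). Then there exists i ∈ {1, 2} such that the pushforward of N(μᵢ, σᵢ²) under f⁻¹ is not a Gaussian measure, i.e., there are no μ ∈ ℝ and σ > 0 with (f⁻¹)_* N(μᵢ, σᵢ²) = N(μ, σ²). -/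
/-!
If both pullbacks `(f⁻¹)_* N(μᵢ, σᵢ²)` were Gaussian, pulling the mixture identity back along `f`
would write `N(μ₀, σ₀²)` as a nontrivial mixture of two Gaussians. Dividing the moment generating
functions gives `a e^{q₁} + (1 - a) e^{q₂} = 1` for quadratics `q₁, q₂`, and growth at infinity
forces `q₁ = q₂ = 0`. So both pullbacks equal `N(μ₀, σ₀²)`, and pushing forward along `f` gives
`N(μ₁, σ₁²) = N(μ₂, σ₂²)`.
-/

open MeasureTheory ProbabilityTheory

/-- The Gaussian probability measure `N(m, s²)` on `ℝ`. -/
noncomputable def gauss (m s : ℝ) : Measure ℝ :=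
  gaussianReal m ⟨s ^ 2, sq_nonneg s⟩

/-- `f` is an admissible flow: a bijection, continuously differentiable, with
nonvanishing derivative. -/
def IsAdmissibleFlow (f : ℝ → ℝ) : Prop :=
  Function.Bijective f ∧ ContDiff ℝ 1 f ∧ ∀ z : ℝ, deriv f z ≠ 0

open Filter Real
open scoped NNReal

lemma neg_or_eq_zero_of_forall_quadratic_le {P Q K : ℝ} (h : ∀ x, P * x ^ 2 + Q * x ≤ K) :
    P < 0 ∨ (P = 0 ∧ Q = 0) := by
  refine (lt_or_ge P 0).imp id fun hP ↦ ?_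
  have hlin : ∀ t ≥ 1, (P + |Q|) * t ≤ K := by
    intro t ht
    have hPt : P * t ≤ P * t ^ 2 := by nlinarith [mul_nonneg hP (sub_nonneg.2 ht)]
    rcases le_total 0 Q with hQ | hQ
    · rw [abs_of_nonneg hQ]; nlinarith [h t]
    · rw [abs_of_nonpos hQ]; nlinarith [h (-t)]
  have hsum : P + |Q| ≤ 0 := by
    by_contra! hpos
    obtain ⟨t, hK, ht⟩ := (((tendsto_id.const_mul_atTop hpos).eventually_ge_atTop (K + 1)).and
      (eventually_ge_atTop 1)).exists
    rw [id] at hK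
    linarith [hlin t ht]
  have hQ := abs_nonneg Q
  exact ⟨by linarith, abs_eq_zero.1 (by linarith)⟩

lemma tendsto_quadratic_atBot {P : ℝ} (hP : P < 0) (Q : ℝ) :
    Tendsto (fun x ↦ P * x ^ 2 + Q * x) atTop atBot := by
  have hlin : Tendsto (fun x ↦ P * x + Q) atTop atBot :=
    tendsto_atBot_add_const_right _ Q (tendsto_id.const_mul_atTop_of_neg hP)
  refine (tendsto_id.atTop_mul_atBot₀ hlin).congr fun x ↦ ?_
  simp only [id]
  ring

-- Each `uᵢ x = Pᵢ x² + Qᵢ x` is bounded above, so `Pᵢ < 0` or `uᵢ = 0`. If `P₁ < 0` then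
-- `u₁ → -∞`, while `u₂ ≤ 0` near `+∞`, where `h` forces `A e^{u₁} ≥ A`, i.e. `u₁ ≥ 0`.
lemma eq_zero_of_mul_exp_add_mul_exp_eq_const {A B C P₁ Q₁ P₂ Q₂ : ℝ} (hA : 0 < A) (hB : 0 < B)
    (h : ∀ x, A * exp (P₁ * x ^ 2 + Q₁ * x) + B * exp (P₂ * x ^ 2 + Q₂ * x) = C) :
    P₁ = 0 ∧ Q₁ = 0 := by
  have hC : A + B = C := by simpa using h 0
  have bounded {D : ℝ} (P Q : ℝ) (hD : 0 < D) (hle : ∀ x, D * exp (P * x ^ 2 + Q * x) ≤ C) :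
      P < 0 ∨ (P = 0 ∧ Q = 0) := by
    refine neg_or_eq_zero_of_forall_quadratic_le (K := log (C / D)) fun x ↦ ?_
    rw [le_log_iff_exp_le (div_pos (by linarith) hD), le_div_iff₀ hD, mul_comm]
    exact hle x
  refine (bounded P₁ Q₁ hA fun x ↦ ?_).resolve_left fun hP₁ ↦ ?_
  · linarith [h x, mul_pos hB (exp_pos (P₂ * x ^ 2 + Q₂ * x))]
  have hu₂ : ∀ᶠ x in atTop, P₂ * x ^ 2 + Q₂ * x ≤ 0 := by
    have hA₁ (x : ℝ) := mul_pos hA (exp_pos (P₁ * x ^ 2 + Q₁ * x))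
    rcases bounded P₂ Q₂ hB fun x ↦ by linarith [h x, hA₁ x] with hP₂ | ⟨rfl, rfl⟩
    · exact (tendsto_quadratic_atBot hP₂ Q₂).eventually_le_atBot 0
    · simp
  have hu₁ : ∀ᶠ x in atTop, 0 ≤ P₁ * x ^ 2 + Q₁ * x := by
    filter_upwards [hu₂] with x hx
    have hB₂ : B * exp (P₂ * x ^ 2 + Q₂ * x) ≤ B :=
      mul_le_of_le_one_right hB.le (exp_le_one_iff.2 hx)
    have : A * 1 ≤ A * exp (P₁ * x ^ 2 + Q₁ * x) := by linarith [h x]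
    exact one_le_exp_iff.1 (le_of_mul_le_mul_left this hA)
  obtain ⟨x, hx₁, hx₂⟩ :=
    (hu₁.and ((tendsto_quadratic_atBot hP₁ Q₁).eventually_lt_atBot 0)).exists
  linarith

lemma mgf_fun_id_gaussianReal_smul_add_smul (m₁ m₂ : ℝ) (v₁ v₂ : ℝ≥0) {a b : ℝ} (ha : 0 ≤ a)
    (hb : 0 ≤ b) (t : ℝ) :
    mgf (fun x ↦ x)
        (ENNReal.ofReal a • gaussianReal m₁ v₁ + ENNReal.ofReal b • gaussianReal m₂ v₂) t
      = a * exp (m₁ * t + v₁ * t ^ 2 / 2) + b * exp (m₂ * t + v₂ * t ^ 2 / 2) := by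
  rw [mgf_add_measure ((integrable_exp_mul_gaussianReal t).smul_measure ENNReal.ofReal_ne_top)
      ((integrable_exp_mul_gaussianReal t).smul_measure ENNReal.ofReal_ne_top),
    mgf_smul_measure, mgf_smul_measure, mgf_fun_id_gaussianReal, mgf_fun_id_gaussianReal,
    ENNReal.toReal_ofReal ha, ENNReal.toReal_ofReal hb]

lemma gaussianReal_inj {m m' : ℝ} {v v' : ℝ≥0} :
    gaussianReal m v = gaussianReal m' v' ↔ m = m' ∧ v = v' := by
  refine ⟨fun h ↦ ⟨?_, ?_⟩, fun h ↦ h.1 ▸ h.2 ▸ rfl⟩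
  · simpa using congrArg (fun μ ↦ ∫ x, x ∂μ) h
  · simpa using congrArg (fun μ ↦ Var[fun x ↦ x; μ]) h

lemma gaussianReal_eq_of_eq_smul_add_smul {m m₁ m₂ : ℝ} {v v₁ v₂ : ℝ≥0} {a b : ℝ} (ha : 0 < a)
    (hb : 0 < b) (h : gaussianReal m v
      = ENNReal.ofReal a • gaussianReal m₁ v₁ + ENNReal.ofReal b • gaussianReal m₂ v₂) :
    gaussianReal m₁ v₁ = gaussianReal m v ∧ gaussianReal m₂ v₂ = gaussianReal m v := by
  have hmgf (t : ℝ) : a * exp ((v₁ - v) / 2 * t ^ 2 + (m₁ - m) * t)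
      + b * exp ((v₂ - v) / 2 * t ^ 2 + (m₂ - m) * t) = 1 := by
    have hmix := congrFun (congrArg (mgf (fun x ↦ x)) h) t
    rw [mgf_fun_id_gaussianReal, mgf_fun_id_gaussianReal_smul_add_smul _ _ _ _ ha.le hb.le]
      at hmix
    beta_reduce at hmix
    have hquot (m' : ℝ) (v' : ℝ≥0) : exp ((v' - v) / 2 * t ^ 2 + (m' - m) * t)
        = exp (m' * t + v' * t ^ 2 / 2) / exp (m * t + v * t ^ 2 / 2) := by
      rw [← exp_sub]; ring_nf
    rw [hquot, hquot, mul_div_assoc', mul_div_assoc', ← add_div, ← hmix,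
      div_self (exp_pos _).ne']
  obtain ⟨hv₁, hm₁⟩ := eq_zero_of_mul_exp_add_mul_exp_eq_const ha hb hmgf
  obtain ⟨hv₂, hm₂⟩ := eq_zero_of_mul_exp_add_mul_exp_eq_const hb ha fun t ↦ by
    rw [add_comm]; exact hmgf t
  exact ⟨gaussianReal_inj.2 ⟨by linarith, NNReal.eq (by linarith)⟩,
    gaussianReal_inj.2 ⟨by linarith, NNReal.eq (by linarith)⟩⟩

lemma gauss_inj {m m' s s' : ℝ} (hs : 0 ≤ s) (hs' : 0 ≤ s') :
    gauss m s = gauss m' s' ↔ m = m' ∧ s = s' := by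
  refine (gaussianReal_inj (v := ⟨s ^ 2, sq_nonneg s⟩) (v' := ⟨s' ^ 2, sq_nonneg s'⟩)).trans ?_
  exact and_congr_right' (NNReal.coe_inj.symm.trans (sq_eq_sq₀ hs hs'))

section Pullback

variable {α β : Type*} [MeasurableSpace α] [MeasurableSpace β] [Nonempty α] {f : α → β}

lemma MeasurableEmbedding.measurable_invFun_of_surjective (hf : MeasurableEmbedding f)
    (hsurj : Function.Surjective f) : Measurable (Function.invFun f) := fun s hs ↦ by
  rw [← Set.image_eq_preimage_of_inverse (Function.leftInverse_invFun hf.injective)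
    (Function.rightInverse_invFun hsurj)]
  exact hf.measurableSet_image' hs

lemma MeasurableEmbedding.map_invFun_map (hf : MeasurableEmbedding f)
    (hsurj : Function.Surjective f) (μ : Measure α) : (μ.map f).map (Function.invFun f) = μ := by
  rw [Measure.map_map (hf.measurable_invFun_of_surjective hsurj) hf.measurable,
    (Function.leftInverse_invFun hf.injective).comp_eq_id, Measure.map_id]

lemma MeasurableEmbedding.map_map_invFun (hf : MeasurableEmbedding f)
    (hsurj : Function.Surjective f) (ν : Measure β) : (ν.map (Function.invFun f)).map f = ν := by
  rw [Measure.map_map hf.measurable (hf.measurable_invFun_of_surjective hsurj),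
    (Function.rightInverse_invFun hsurj).comp_eq_id, Measure.map_id]

end Pullback

theorem stmt0_general (a μ₀ μ₁ μ₂ σ₀ σ₁ σ₂ : ℝ)
    (ha : a ∈ Set.Ioo (0 : ℝ) 1)
    (hσ₁ : 0 < σ₁) (hσ₂ : 0 < σ₂)
    (hne : (μ₁, σ₁) ≠ (μ₂, σ₂))
    (f : ℝ → ℝ) (hf : IsAdmissibleFlow f)
    (hpush : Measure.map f (gauss μ₀ σ₀)
      = ENNReal.ofReal a • gauss μ₁ σ₁ + ENNReal.ofReal (1 - a) • gauss μ₂ σ₂) :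
    (¬ ∃ (μ : ℝ) (σ : ℝ), 0 < σ ∧
        Measure.map (Function.invFun f) (gauss μ₁ σ₁) = gauss μ σ) ∨
    (¬ ∃ (μ : ℝ) (σ : ℝ), 0 < σ ∧
        Measure.map (Function.invFun f) (gauss μ₂ σ₂) = gauss μ σ) := by
  rw [← not_and_or]
  rintro ⟨⟨ν₁, τ₁, -, h₁⟩, ⟨ν₂, τ₂, -, h₂⟩⟩
  have hemb : MeasurableEmbedding f := hf.2.1.continuous.measurableEmbedding hf.1.1
  have hg := hemb.measurable_invFun_of_surjective hf.1.2
  have hmix : gauss μ₀ σ₀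
      = ENNReal.ofReal a • gauss ν₁ τ₁ + ENNReal.ofReal (1 - a) • gauss ν₂ τ₂ := by
    rw [← h₁, ← h₂, ← Measure.map_smul, ← Measure.map_smul, ← Measure.map_add _ _ hg, ← hpush,
      hemb.map_invFun_map hf.1.2]
  obtain ⟨hν₁, hν₂⟩ := gaussianReal_eq_of_eq_smul_add_smul ha.1 (sub_pos.2 ha.2) hmix
  have hgauss : gauss μ₁ σ₁ = gauss μ₂ σ₂ := by
    rw [← hemb.map_map_invFun hf.1.2 (gauss μ₁ σ₁), ← hemb.map_map_invFun hf.1.2 (gauss μ₂ σ₂),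
      h₁, h₂]
    exact congrArg _ (hν₁.trans hν₂.symm)
  exact hne (Prod.ext_iff.2 ((gauss_inj hσ₁.le hσ₂.le).1 hgauss))

theorem stmt0 (a μ₀ μ₁ μ₂ σ₀ σ₁ σ₂ : ℝ)
    (ha : a ∈ Set.Ioo (0 : ℝ) 1)
    (hσ₀ : 0 < σ₀) (hσ₁ : 0 < σ₁) (hσ₂ : 0 < σ₂)
    (hne : (μ₁, σ₁) ≠ (μ₂, σ₂))
    (f : ℝ → ℝ) (hf : IsAdmissibleFlow f)
    (hpush : Measure.map f (gauss μ₀ σ₀)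
      = ENNReal.ofReal a • gauss μ₁ σ₁ + ENNReal.ofReal (1 - a) • gauss μ₂ σ₂) :
    (¬ ∃ (μ : ℝ) (σ : ℝ), 0 < σ ∧
        Measure.map (Function.invFun f) (gauss μ₁ σ₁) = gauss μ σ) ∨
    (¬ ∃ (μ : ℝ) (σ : ℝ), 0 < σ ∧
        Measure.map (Function.invFun f) (gauss μ₂ σ₂) = gauss μ σ) :=
  stmt0_general a μ₀ μ₁ μ₂ σ₀ σ₁ σ₂ ha hσ₁ hσ₂ hne f hf hpush
end

section
/- Let a ∈ (0,1), let μ₀, μ₁, μ₂ ∈ ℝ and σ₀, σ₁, σ₂ > 0 with σ₁ > σ₂, and let f : ℝ → ℝ be an admissible flow such that the pushforward of N(μ₀, σ₀²) under f equals the mixture a·N(μ₁, σ₁²) + (1−a)·N(μ₂, σ₂²). Then the pushforward of the first component N(μ₁, σ₁²) under f⁻¹ is not a Gaussian measure: there are no μ ∈ ℝ and σ > 0 with (f⁻¹)_* N(μ₁, σ₁²) = N(μ, σ²). -/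
open MeasureTheory ProbabilityTheory

/-!
If `(f⁻¹)_* N(μ₁, σ₁²)` were Gaussian, then `f⁻¹`, which is strictly monotone as the inverse of
an injective continuous map, would coincide with the affine map of the same monotonicity carrying
`N(μ₁, σ₁²)` to that Gaussian: two strictly increasing maps pushing a measure to one with strictly
increasing distribution function agree, as `ν(Iic (φ t)) = μ(Iic t)`. So `f` is affine and
`f_* N(μ₀, σ₀²)` is Gaussian. But a mixture `a N(μ₁, σ₁²) + (1 - a) N(μ₂, σ₂²)` with `σ₂ < σ₁` is
never Gaussian: divided by the moment generating function of `N(μ₁, σ₁²)`, its moment generating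
function is `a + o(1)` as `t → ∞`, while the quotient of two Gaussian ones is the exponential of a
quadratic without constant term, which can only converge to `1`.
-/

open Set Function Filter Real Topology
open scoped NNReal ENNReal

theorem StrictMono.invFun {α β : Type*} [LinearOrder α] [LinearOrder β] [Nonempty α]
    {f : α → β} (hf : StrictMono f) (hsurj : Surjective f) :
    StrictMono (invFun f) := fun x y hxy =>
  hf.lt_iff_lt.1 (by rwa [rightInverse_invFun hsurj x, rightInverse_invFun hsurj y])

theorem StrictAnti.invFun {α β : Type*} [LinearOrder α] [LinearOrder β] [Nonempty α]
    {f : α → β} (hf : StrictAnti f) (hsurj : Surjective f) :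
    StrictAnti (invFun f) := fun x y hxy =>
  hf.lt_iff_gt.1 (by rwa [rightInverse_invFun hsurj x, rightInverse_invFun hsurj y])

theorem StrictMono.map_apply_Iic {φ : ℝ → ℝ} (hφ : StrictMono φ) (μ : Measure ℝ) (t : ℝ) :
    μ.map φ (Iic (φ t)) = μ (Iic t) := by
  rw [Measure.map_apply hφ.monotone.measurable measurableSet_Iic]
  congr 1
  ext x
  simp [hφ.le_iff_le]

theorem strictMono_measure_Iic {ν : Measure ℝ} [IsFiniteMeasure ν] (hν : volume ≪ ν) :
    StrictMono fun t => ν (Iic t) := by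
  intro s t hst
  change ν _ < ν _
  rw [← Iic_union_Ioc_eq_Iic hst.le, measure_union (Iic_disjoint_Ioc le_rfl) measurableSet_Ioc]
  refine ENNReal.lt_add_right (measure_ne_top _ _) fun h => ?_
  simpa [hst.not_ge] using hν h

theorem StrictMono.eq_of_map_eq {φ ψ : ℝ → ℝ} (hφ : StrictMono φ) (hψ : StrictMono ψ)
    {μ ν : Measure ℝ} (hν : StrictMono fun t => ν (Iic t))
    (hφμ : μ.map φ = ν) (hψμ : μ.map ψ = ν) : φ = ψ := by
  funext t
  apply hν.injective
  calc ν (Iic (φ t)) = μ (Iic t) := by rw [← hφμ, hφ.map_apply_Iic]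
    _ = ν (Iic (ψ t)) := by rw [← hψμ, hψ.map_apply_Iic]

instance (m s : ℝ) : IsProbabilityMeasure (gauss m s) :=
  instIsProbabilityMeasureGaussianReal _ _

theorem gauss_map_affine (m s r c : ℝ) :
    (gauss m s).map (fun x => r * x + c) = gauss (r * m + c) (|r| * s) := by
  rw [show (fun x => r * x + c) = (· + c) ∘ (r * ·) from rfl,
    ← Measure.map_map (measurable_add_const c) (measurable_const_mul r), gauss,
    gaussianReal_map_const_mul (v := ⟨s ^ 2, sq_nonneg s⟩), gaussianReal_map_add_const, gauss]
  congr 1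
  ext
  change r ^ 2 * s ^ 2 = (|r| * s) ^ 2
  rw [mul_pow, sq_abs]

theorem volume_absolutelyContinuous_gauss (m : ℝ) {s : ℝ} (hs : s ≠ 0) : volume ≪ gauss m s :=
  gaussianReal_absolutelyContinuous' m fun h =>
    hs ((pow_eq_zero_iff two_ne_zero).1 (congrArg NNReal.toReal h))

theorem StrictMono.eq_affine_of_map_gauss {g : ℝ → ℝ} (hg : StrictMono g) {m s m' s' : ℝ}
    (hs : 0 < s) (hs' : 0 < s') (h : (gauss m s).map g = gauss m' s') :
    g = fun t => s' / s * t + (m' - s' / s * m) := by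
  have hr : 0 < s' / s := div_pos hs' hs
  refine hg.eq_of_map_eq ((strictMono_mul_left_of_pos hr).add_const _)
    (strictMono_measure_Iic (volume_absolutelyContinuous_gauss m' hs'.ne')) h ?_
  rw [gauss_map_affine, abs_of_pos hr, div_mul_cancel₀ _ hs.ne']
  ring_nf

theorem exists_affine_of_map_gauss {g : ℝ → ℝ} (hg : StrictMono g ∨ StrictAnti g)
    {m s m' s' : ℝ} (hs : 0 < s) (hs' : 0 < s') (h : (gauss m s).map g = gauss m' s') :
    ∃ r c : ℝ, r ≠ 0 ∧ g = fun t => r * t + c := by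
  rcases hg with hg | hg
  · exact ⟨_, _, (div_pos hs' hs).ne', hg.eq_affine_of_map_gauss hs hs' h⟩
  · have hneg : (gauss m s).map (fun t => -g t) = gauss (-m') s' := by
      rw [show (fun t => -g t) = (-·) ∘ g from rfl,
        ← Measure.map_map measurable_neg hg.antitone.measurable, h]
      exact gaussianReal_map_neg
    have hnegg := hg.neg.eq_affine_of_map_gauss hs hs' hneg
    refine ⟨-(s' / s), m' + s' / s * m, neg_ne_zero.2 (div_pos hs' hs).ne', funext fun t => ?_⟩
    have := congrFun hnegg t
    beta_reduce at this ⊢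
    linarith

open Polynomial in
theorem eq_zero_of_tendsto_quadratic {α β L : ℝ}
    (h : Tendsto (fun t => α * t ^ 2 + β * t) atTop (𝓝 L)) : L = 0 := by
  have hP : Tendsto (fun t => (C α * X ^ 2 + C β * X).eval t) atTop (𝓝 L) := by
    simpa using h
  obtain ⟨hlead, hdeg⟩ := (Polynomial.tendsto_nhds_iff _).1 hP
  rw [eq_C_of_degree_le_zero hdeg] at hlead
  simpa using hlead.symm

theorem tendsto_quadratic_atBot_s1 {α : ℝ} (hα : α < 0) (β : ℝ) :
    Tendsto (fun t => α * t ^ 2 + β * t) atTop atBot := by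
  have h : Tendsto (fun t => t * (α * t + β)) atTop atBot :=
    tendsto_id.atTop_mul_atBot₀
      (tendsto_atBot_add_const_right _ β (tendsto_id.const_mul_atTop_of_neg hα))
  exact h.congr fun t => by ring

theorem mgf_mixture_gaussianReal {a b : ℝ≥0∞} (ha : a ≠ ∞) (hb : b ≠ ∞) (μ₁ μ₂ : ℝ)
    (v₁ v₂ : ℝ≥0) (t : ℝ) :
    mgf id (a • gaussianReal μ₁ v₁ + b • gaussianReal μ₂ v₂) t
      = a.toReal * exp (μ₁ * t + v₁ * t ^ 2 / 2) + b.toReal * exp (μ₂ * t + v₂ * t ^ 2 / 2) := by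
  rw [mgf_add_measure, mgf_smul_measure, mgf_smul_measure, mgf_id_gaussianReal,
    mgf_id_gaussianReal]
  all_goals exact (integrable_exp_mul_gaussianReal t).smul_measure ‹_›

theorem mixture_gaussianReal_ne_gaussianReal {a : ℝ} (ha₀ : 0 < a) (ha₁ : a < 1) {μ₁ μ₂ m : ℝ}
    {v₁ v₂ v : ℝ≥0} (hv : v₂ < v₁) :
    ENNReal.ofReal a • gaussianReal μ₁ v₁ + ENNReal.ofReal (1 - a) • gaussianReal μ₂ v₂
      ≠ gaussianReal m v := by
  intro h
  have hmgf (t : ℝ) : a + (1 - a) * exp ((v₂ - v₁) / 2 * t ^ 2 + (μ₂ - μ₁) * t)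
      = exp ((v - v₁) / 2 * t ^ 2 + (m - μ₁) * t) := by
    have := congrArg (fun ν => mgf id ν t) h
    simp only [mgf_mixture_gaussianReal ENNReal.ofReal_ne_top ENNReal.ofReal_ne_top,
      mgf_id_gaussianReal, ENNReal.toReal_ofReal ha₀.le,
      ENNReal.toReal_ofReal (sub_nonneg.2 ha₁.le)] at this
    rw [show (v₂ - v₁) / 2 * t ^ 2 + (μ₂ - μ₁) * t
        = (μ₂ * t + v₂ * t ^ 2 / 2) - (μ₁ * t + v₁ * t ^ 2 / 2) by ring,
      show (v - v₁) / 2 * t ^ 2 + (m - μ₁) * t = (m * t + v * t ^ 2 / 2) - (μ₁ * t + v₁ * t ^ 2 / 2)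
        by ring, exp_sub, exp_sub, ← this]
    field_simp
  have hlim : Tendsto (fun t => (v - v₁) / 2 * t ^ 2 + (m - μ₁) * t) atTop (𝓝 (log a)) := by
    have h₂ : Tendsto (fun t => exp ((v₂ - v₁) / 2 * t ^ 2 + (μ₂ - μ₁) * t)) atTop (𝓝 0) :=
      tendsto_exp_atBot.comp <| tendsto_quadratic_atBot_s1
        (by have : (v₂ : ℝ) < v₁ := hv; linarith) _
    have := ((tendsto_const_nhds (x := a)).add (h₂.const_mul (1 - a))).log (by simpa using ha₀.ne')
    simpa [hmgf] using this
  exact (log_neg ha₀ ha₁).ne (eq_zero_of_tendsto_quadratic hlim)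

theorem stmt1_general (a μ₀ μ₁ μ₂ σ₀ σ₁ σ₂ : ℝ)
    (ha : a ∈ Set.Ioo (0 : ℝ) 1)
    (hσ₁ : 0 < σ₁) (hσ₂ : 0 < σ₂)
    (hσ : σ₁ > σ₂)
    (f : ℝ → ℝ) (hf : IsAdmissibleFlow f)
    (hpush : Measure.map f (gauss μ₀ σ₀)
      = ENNReal.ofReal a • gauss μ₁ σ₁ + ENNReal.ofReal (1 - a) • gauss μ₂ σ₂) :
    ¬ ∃ (μ : ℝ) (σ : ℝ), 0 < σ ∧
        Measure.map (Function.invFun f) (gauss μ₁ σ₁) = gauss μ σ := by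
  rintro ⟨μ, σ, hσpos, hmap⟩
  obtain ⟨hbij, hC1, -⟩ := hf
  have hg_mono : StrictMono (invFun f) ∨ StrictAnti (invFun f) :=
    (hC1.continuous.strictMono_of_inj hbij.1).imp (·.invFun hbij.2) (·.invFun hbij.2)
  obtain ⟨r, c, hr, hg⟩ := exists_affine_of_map_gauss hg_mono hσ₁ hσpos hmap
  have hf_affine : f = fun t => r⁻¹ * t + -(r⁻¹ * c) := by
    funext t
    have := leftInverse_invFun hbij.1 t
    rw [hg] at this
    field_simp
    linarith
  rw [hf_affine, gauss_map_affine] at hpush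
  have hvar : (⟨σ₂ ^ 2, sq_nonneg σ₂⟩ : ℝ≥0) < ⟨σ₁ ^ 2, sq_nonneg σ₁⟩ :=
    show σ₂ ^ 2 < σ₁ ^ 2 by gcongr
  exact mixture_gaussianReal_ne_gaussianReal ha.1 ha.2 hvar hpush.symm

theorem stmt1 (a μ₀ μ₁ μ₂ σ₀ σ₁ σ₂ : ℝ)
    (ha : a ∈ Set.Ioo (0 : ℝ) 1)
    (hσ₀ : 0 < σ₀) (hσ₁ : 0 < σ₁) (hσ₂ : 0 < σ₂)
    (hσ : σ₁ > σ₂)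
    (f : ℝ → ℝ) (hf : IsAdmissibleFlow f)
    (hpush : Measure.map f (gauss μ₀ σ₀)
      = ENNReal.ofReal a • gauss μ₁ σ₁ + ENNReal.ofReal (1 - a) • gauss μ₂ σ₂) :
    ¬ ∃ (μ : ℝ) (σ : ℝ), 0 < σ ∧
        Measure.map (Function.invFun f) (gauss μ₁ σ₁) = gauss μ σ :=
  stmt1_general a μ₀ μ₁ μ₂ σ₀ σ₁ σ₂ ha hσ₁ hσ₂ hσ f hf hpush
end

section
/- Let a ∈ (0,1), let μ₁, μ₂ ∈ ℝ and σ₁, σ₂ > 0 with (μ₁, σ₁) ≠ (μ₂, σ₂). Then there do not exist an admissible flow f : ℝ → ℝ and Gaussian measures N(ν₀, ρ₀²), N(ν₁, ρ₁²), N(ν₂, ρ₂²) (with ν₀, ν₁, ν₂ ∈ ℝ, ρ₀, ρ₁, ρ₂ > 0) such that f_* N(ν₀, ρ₀²) = a·N(μ₁, σ₁²) + (1−a)·N(μ₂, σ₂²) and simultaneously f_* N(νᵢ, ρᵢ²) = N(μᵢ, σᵢ²) for both i = 1 and i = 2. In other words, no single one-to-one flow transformation can map Gaussian base distributions exactly onto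 a two-component Gaussian mixture and onto each of its components at the same time. -/
/-!
Pulling back along the flow, which is a measurable embedding, turns the three pushforward
identities into `N(ν₀, ρ₀²) = a N(ν₁, ρ₁²) + (1 - a) N(ν₂, ρ₂²)`. Dividing the moment generating
functions by that of `N(ν₀, ρ₀²)` gives `a exp q₁ + (1 - a) exp q₂ = 1` with quadratics `qᵢ`
vanishing at `0`. Each `qᵢ` is then bounded above, so `exp qᵢ(t)` tends to `1` if `qᵢ = 0` and to
`0` otherwise as `t → ∞`; the identity forces both limits to be `1`. Hence the two base Gaussians
coincide, so do their images `N(μ₁, σ₁²)` and `N(μ₂, σ₂²)`, and mean and variance recover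
`(μ₁, σ₁) = (μ₂, σ₂)`.
-/

open MeasureTheory ProbabilityTheory

open Filter Topology Real
open scoped NNReal ENNReal

lemma tendsto_quadratic_atBot_of_bddAbove {b d C : ℝ} (h : ∀ t, b * t + d * t ^ 2 ≤ C)
    (hbd : ¬(b = 0 ∧ d = 0)) : Tendsto (fun t => b * t + d * t ^ 2) atTop atBot := by
  have hfac : (fun t : ℝ => b * t + d * t ^ 2) = fun t => t * (b + d * t) := by ext; ring
  have hnot : ¬Tendsto (fun t : ℝ => b * t + d * t ^ 2) atTop atTop := fun hT =>
    let ⟨t, ht⟩ := (hT.eventually_gt_atTop C).exists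
    (h t).not_gt ht
  rw [hfac] at hnot ⊢
  rcases lt_trichotomy d 0 with hd | rfl | hd
  · exact tendsto_id.atTop_mul_atBot₀
      (tendsto_atBot_add_const_left _ b ((tendsto_const_mul_atBot_of_neg hd).2 tendsto_id))
  · simp only [zero_mul, add_zero] at hnot ⊢
    rcases lt_or_gt_of_ne fun hb => hbd ⟨hb, rfl⟩ with hb | hb
    · exact tendsto_id.atTop_mul_const_of_neg hb
    · exact absurd (tendsto_id.atTop_mul_const hb) hnot
  · exact absurd (tendsto_id.atTop_mul_atTop₀
      (tendsto_atTop_add_const_left _ b (tendsto_id.const_mul_atTop hd))) hnot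

lemma tendsto_exp_quadratic_of_bddAbove {b d C : ℝ} (h : ∀ t, b * t + d * t ^ 2 ≤ C) :
    Tendsto (fun t => exp (b * t + d * t ^ 2)) atTop (𝓝 (if b = 0 ∧ d = 0 then 1 else 0)) := by
  split_ifs with hbd
  · obtain ⟨rfl, rfl⟩ := hbd
    simp
  · exact tendsto_exp_atBot.comp (tendsto_quadratic_atBot_of_bddAbove h hbd)

lemma eq_zero_of_mixture_exp_quadratic_eq_one {a b₁ d₁ b₂ d₂ : ℝ} (ha : a ∈ Set.Ioo 0 1)
    (h : ∀ t, a * exp (b₁ * t + d₁ * t ^ 2) + (1 - a) * exp (b₂ * t + d₂ * t ^ 2) = 1) :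
    b₁ = 0 ∧ d₁ = 0 ∧ b₂ = 0 ∧ d₂ = 0 := by
  obtain ⟨ha₀, ha₁⟩ := ha
  have bdd : ∀ {c b d : ℝ}, 0 < c → (∀ t, c * exp (b * t + d * t ^ 2) ≤ 1) →
      ∀ t, b * t + d * t ^ 2 ≤ log (1 / c) := fun hc hle t =>
    (le_log_iff_exp_le (one_div_pos.2 hc)).2 ((le_div_iff₀' hc).2 (hle t))
  have h₁ := tendsto_exp_quadratic_of_bddAbove <| bdd (b := b₁) (d := d₁) ha₀ fun t => by
    nlinarith [h t, exp_pos (b₂ * t + d₂ * t ^ 2)]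
  have h₂ := tendsto_exp_quadratic_of_bddAbove <|
    bdd (b := b₂) (d := d₂) (sub_pos.2 ha₁) fun t => by
      nlinarith [h t, exp_pos (b₁ * t + d₁ * t ^ 2)]
  have hlim := tendsto_nhds_unique ((h₁.const_mul a).add (h₂.const_mul (1 - a)))
    (tendsto_const_nhds.congr fun t => (h t).symm)
  split_ifs at hlim with hq₁ hq₂ hq₂
  · exact ⟨hq₁.1, hq₁.2, hq₂.1, hq₂.2⟩
  all_goals linarith

lemma gaussianReal_eq_of_eq_mixture {a m₀ m₁ m₂ : ℝ} {v₀ v₁ v₂ : ℝ≥0} (ha : a ∈ Set.Ioo 0 1)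
    (h : gaussianReal m₀ v₀
      = ENNReal.ofReal a • gaussianReal m₁ v₁ + ENNReal.ofReal (1 - a) • gaussianReal m₂ v₂) :
    gaussianReal m₁ v₁ = gaussianReal m₀ v₀ ∧ gaussianReal m₂ v₂ = gaussianReal m₀ v₀ := by
  have hmgf : ∀ t, exp (m₀ * t + v₀ * t ^ 2 / 2)
      = a * exp (m₁ * t + v₁ * t ^ 2 / 2) + (1 - a) * exp (m₂ * t + v₂ * t ^ 2 / 2) := by
    intro t
    have := congrArg (fun P => mgf (fun x => x) P t) h
    rwa [mgf_add_measure
        ((integrable_exp_mul_gaussianReal t).smul_measure ENNReal.ofReal_ne_top)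
        ((integrable_exp_mul_gaussianReal t).smul_measure ENNReal.ofReal_ne_top),
      mgf_smul_measure, mgf_smul_measure, ENNReal.toReal_ofReal ha.1.le,
      ENNReal.toReal_ofReal (sub_nonneg.2 ha.2.le), mgf_fun_id_gaussianReal,
      mgf_fun_id_gaussianReal, mgf_fun_id_gaussianReal] at this
  have hratio : ∀ t, a * exp ((m₁ - m₀) * t + ((v₁ - v₀) / 2) * t ^ 2)
      + (1 - a) * exp ((m₂ - m₀) * t + ((v₂ - v₀) / 2) * t ^ 2) = 1 := by
    intro t
    have e : ∀ m v : ℝ, exp ((m - m₀) * t + ((v - v₀) / 2) * t ^ 2)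
        = exp (m * t + v * t ^ 2 / 2) / exp (m₀ * t + v₀ * t ^ 2 / 2) := fun m v => by
      rw [← exp_sub]; ring_nf
    rw [e, e, ← mul_div_assoc, ← mul_div_assoc, ← add_div, ← hmgf, div_self (exp_pos _).ne']
  obtain ⟨hm₁, hv₁, hm₂, hv₂⟩ := eq_zero_of_mixture_exp_quadratic_eq_one ha hratio
  rw [sub_eq_zero.1 hm₁, sub_eq_zero.1 hm₂, NNReal.coe_injective (by linarith : (v₁ : ℝ) = v₀),
    NNReal.coe_injective (by linarith : (v₂ : ℝ) = v₀)]
  exact ⟨rfl, rfl⟩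

lemma gaussianReal_inj_s10 {m₁ m₂ : ℝ} {v₁ v₂ : ℝ≥0} :
    gaussianReal m₁ v₁ = gaussianReal m₂ v₂ ↔ m₁ = m₂ ∧ v₁ = v₂ := by
  refine ⟨fun h => ⟨?_, NNReal.coe_injective ?_⟩, fun ⟨hm, hv⟩ => hm ▸ hv ▸ rfl⟩
  · rw [← integral_id_gaussianReal (μ := m₁) (v := v₁), h, integral_id_gaussianReal]
  · rw [← variance_id_gaussianReal (μ := m₁) (v := v₁), h, variance_id_gaussianReal]

lemma gauss_inj_s10 {μ₁ μ₂ σ₁ σ₂ : ℝ} (hσ₁ : 0 ≤ σ₁) (hσ₂ : 0 ≤ σ₂) :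
    gauss μ₁ σ₁ = gauss μ₂ σ₂ ↔ μ₁ = μ₂ ∧ σ₁ = σ₂ :=
  gaussianReal_inj_s10.trans (and_congr_right' (NNReal.coe_inj.symm.trans (sq_eq_sq₀ hσ₁ hσ₂)))

lemma IsAdmissibleFlow.measurableEmbedding {f : ℝ → ℝ} (hf : IsAdmissibleFlow f) :
    MeasurableEmbedding f :=
  hf.2.1.continuous.measurableEmbedding hf.1.injective

theorem stmt10 (a μ₁ μ₂ σ₁ σ₂ : ℝ)
    (ha : a ∈ Set.Ioo (0 : ℝ) 1)
    (hσ₁ : 0 < σ₁) (hσ₂ : 0 < σ₂)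
    (hne : (μ₁, σ₁) ≠ (μ₂, σ₂)) :
    ¬ ∃ (f : ℝ → ℝ) (ν₀ ν₁ ν₂ ρ₀ ρ₁ ρ₂ : ℝ),
        IsAdmissibleFlow f ∧ 0 < ρ₀ ∧ 0 < ρ₁ ∧ 0 < ρ₂ ∧
        Measure.map f (gauss ν₀ ρ₀)
          = ENNReal.ofReal a • gauss μ₁ σ₁ + ENNReal.ofReal (1 - a) • gauss μ₂ σ₂ ∧
        Measure.map f (gauss ν₁ ρ₁) = gauss μ₁ σ₁ ∧
        Measure.map f (gauss ν₂ ρ₂) = gauss μ₂ σ₂ := by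
  rintro ⟨f, ν₀, ν₁, ν₂, ρ₀, ρ₁, ρ₂, hf, -, -, -, h₀, h₁, h₂⟩
  have hemb := hf.measurableEmbedding
  have hbase : gauss ν₀ ρ₀
      = ENNReal.ofReal a • gauss ν₁ ρ₁ + ENNReal.ofReal (1 - a) • gauss ν₂ ρ₂ :=
    hemb.map_injective <| by
      rw [Measure.map_add _ _ hemb.measurable, Measure.map_smul, Measure.map_smul, h₀, h₁, h₂]
  obtain ⟨e₁, e₂⟩ := gaussianReal_eq_of_eq_mixture ha hbase
  have hbase_eq : gauss ν₁ ρ₁ = gauss ν₂ ρ₂ := e₁.trans e₂.symm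
  exact hne (Prod.ext_iff.2 ((gauss_inj_s10 hσ₁.le hσ₂.le).1 (by rw [← h₁, ← h₂, hbase_eq])))
end
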